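/- The series ∑_{n=1}^∞ 1/(1 + n²) converges and 1 + 2·∑_{n=1}^∞ 1/(1+n²) = π·coth(π). -/

import Mathlib

/-! Evaluate Mathlib's Mittag-Leffler expansion
`π cot (π z) = 1 / z + ∑_{n ≥ 1} (1 / (z - n) + 1 / (z + n))` at the imaginary point `z = i y`:
there `π cot (π i y) = -i π coth (π y)` and the pair of terms at `± n` combines to
`-i · 2y / (y² + n²)`, so dividing by `-i` gives a real identity; take `y = 1`. -/

open Real

lemma summable_one_div_sq_add_sq (y : ℝ) : Summable fun n : ℕ+ => 1 / (y ^ 2 + (n : ℝ) ^ 2) :=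
  ((Real.summable_one_div_nat_pow.mpr one_lt_two).comp_injective PNat.coe_injective).of_nonneg_of_le
    (fun _ => by positivity) fun n =>
      one_div_le_one_div_of_le (by positivity) (le_add_of_nonneg_left (sq_nonneg y))

section

open Complex

lemma ofReal_mul_I_mem_integerComplement {y : ℝ} (hy : y ≠ 0) : (y * I : ℂ) ∈ integerComplement := by
  rintro ⟨n, hn⟩
  simpa using hy (by simpa using (congrArg Complex.im hn).symm)

lemma one_div_ofReal_mul_I_sub_add (y x : ℝ) (hy : y ≠ 0) :
    1 / (y * I - x) + 1 / (y * I + x) = -I * ((2 * y / (y ^ 2 + x ^ 2) : ℝ) : ℂ) := by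
  have hyx : (y : ℂ) ^ 2 + x ^ 2 ≠ 0 := by exact_mod_cast (by positivity : y ^ 2 + x ^ 2 ≠ 0)
  have h1 : (y * I - x : ℂ) ≠ 0 := fun h => by simpa [hy] using congrArg Complex.im h
  have h2 : (y * I + x : ℂ) ≠ 0 := fun h => by simpa [hy] using congrArg Complex.im h
  rw [div_add_div _ _ h1 h2, div_eq_iff (mul_ne_zero h1 h2)]
  push_cast
  field_simp
  linear_combination (2 * (y : ℂ) ^ 3 * I) * I_sq

lemma pi_mul_cot_pi_mul_ofReal_mul_I (y : ℝ) :
    π * cot (π * (y * I)) = -I * ((π * (Real.cosh (π * y) / Real.sinh (π * y)) : ℝ) : ℂ) := by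
  rw [Complex.cot_eq_cos_div_sin, ← mul_assoc, cos_mul_I, sin_mul_I]
  push_cast
  rw [div_mul_eq_div_div, div_I]
  ring

theorem pi_mul_cosh_div_sinh_eq_tsum {y : ℝ} (hy : y ≠ 0) :
    π * (Real.cosh (π * y) / Real.sinh (π * y))
      = 1 / y + 2 * y * ∑' n : ℕ+, 1 / (y ^ 2 + (n : ℝ) ^ 2) := by
  have hterm (n : ℕ+) : 1 / (y * I - n) + 1 / (y * I + n)
      = -I * ((2 * y / (y ^ 2 + (n : ℝ) ^ 2) : ℝ) : ℂ) := by
    exact_mod_cast one_div_ofReal_mul_I_sub_add y n hy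
  have hpole : 1 / (y * I : ℂ) = -I * ((1 / y : ℝ) : ℂ) := by
    rw [← div_div, div_I]
    push_cast
    ring
  have h := cot_series_rep (ofReal_mul_I_mem_integerComplement hy)
  rw [pi_mul_cot_pi_mul_ofReal_mul_I, tsum_congr hterm, tsum_mul_left, hpole, ← mul_add,
    ← ofReal_tsum, ← ofReal_add] at h
  simp_rw [← tsum_mul_left, mul_one_div]
  exact_mod_cast mul_left_cancel₀ (neg_ne_zero.mpr I_ne_zero) h

end

theorem stmt1 :
    Summable (fun n : ℕ+ => 1 / (1 + (n : ℝ)^2)) ∧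
    1 + 2 * ∑' n : ℕ+, 1 / (1 + (n : ℝ)^2) = π * (Real.cosh π / Real.sinh π) := by
  have h := pi_mul_cosh_div_sinh_eq_tsum one_ne_zero
  simp only [mul_one, one_pow, div_one] at h
  exact ⟨by simpa using summable_one_div_sq_add_sq 1, h.symm⟩
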